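/- arXiv:1905.08984 — 3 statements merged into one kernel-verified Lean document; each statement's English description precedes it below -/
import Mathlib

section
/- Let K be an algebraically closed field equipped with a nonarchimedean absolute value |·| : K → ℝ, let p ≥ 2 be an integer, let m be a natural number, and let α, ξ ∈ K with |α| = 1 and |ξ| ≤ 1. Then for every c ∈ K with |c| ≤ 1 there exists a ∈ K with |a| ≤ 1 such that α^m · a^p − ξ^m · a = c. In other words, the map a ↦ α^m a^p − ξ^m a from the valuation ring O = {x ∈ K : |x| ≤ 1} to itself is surjective. -/
/-! The roots `a₁, …, a_p` of `α^m X^p - ξ^m X - c` satisfy `|α^m| · ∏ |aᵢ| = |c|`, so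
`∏ |aᵢ| = |c| ≤ 1` and some root has `|aᵢ| ≤ 1`. -/

open Polynomial

lemma Multiset.exists_le_one_of_prod_le_one {R : Type*} [CommMonoidWithZero R] [LinearOrder R]
    [ZeroLEOneClass R] [PosMulMono R] {s : Multiset R} (hs : s ≠ 0) (h : s.prod ≤ 1) :
    ∃ x ∈ s, x ≤ 1 := by
  by_contra! hlt
  obtain ⟨a, ha⟩ := exists_mem_of_ne_zero hs
  obtain ⟨t, rfl⟩ := exists_cons_of_mem ha
  rw [prod_cons] at h
  have hprod : 1 < a * t.prod := one_lt_mul_of_lt_of_le (hlt a (mem_cons_self a t))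
    (one_le_prod fun x hx ↦ (hlt x (mem_cons_of_mem hx)).le)
  exact h.not_gt hprod

theorem Polynomial.Splits.exists_mem_roots_abv_le_one {R S : Type*} [CommRing R] [IsDomain R]
    [Field S] [LinearOrder S] [IsStrictOrderedRing S] (v : AbsoluteValue R S) {f : R[X]}
    (hf : f.Splits) (hdeg : 0 < f.natDegree) (hcoeff : v (f.coeff 0) ≤ v f.leadingCoeff) :
    ∃ a ∈ f.roots, v a ≤ 1 := by
  have hlc : 0 < v f.leadingCoeff :=
    v.pos (leadingCoeff_ne_zero.mpr (ne_zero_of_natDegree_gt hdeg))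
  rw [hf.coeff_zero_eq_leadingCoeff_mul_prod_roots, map_mul, map_mul, map_pow, v.map_neg,
    v.map_one, one_pow, one_mul, map_multiset_prod] at hcoeff
  have hprod : (f.roots.map v).prod ≤ 1 := le_of_mul_le_mul_left (by simpa using hcoeff) hlc
  have hroots : f.roots.map v ≠ 0 := by
    rw [Ne, Multiset.map_eq_zero, ← Multiset.card_eq_zero, ← hf.natDegree_eq_card_roots]
    exact hdeg.ne'
  obtain ⟨_, hx, hle⟩ := Multiset.exists_le_one_of_prod_le_one hroots hprod
  obtain ⟨a, ha, rfl⟩ := Multiset.mem_map.mp hx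
  exact ⟨a, ha, hle⟩

lemma Polynomial.natDegree_leadingCoeff_C_mul_X_pow_sub_C_mul_X_sub_C {R : Type*} [Ring R]
    [Nontrivial R] {a : R} (ha : a ≠ 0) (b c : R) {n : ℕ} (hn : 2 ≤ n) :
    (C a * X ^ n - C b * X - C c).natDegree = n ∧
      (C a * X ^ n - C b * X - C c).leadingCoeff = a := by
  have hdeg : (C a * X ^ n - C b * X - C c).natDegree = n := by
    compute_degree!
    · simpa [show n ≠ 0 by omega, show n ≠ 1 by omega] using ha
    all_goals omega
  refine ⟨hdeg, ?_⟩
  rw [leadingCoeff, hdeg]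
  simp [coeff_X, coeff_C, show n ≠ 0 by omega, show 1 ≠ n by omega]

theorem stmt1_general {K : Type*} [Field K] [IsAlgClosed K] (v : AbsoluteValue K ℝ)
    (p : ℕ) (hp : 2 ≤ p) (m : ℕ)
    (α ξ : K) (hα : v α = 1) :
    ∀ c : K, v c ≤ 1 → ∃ a : K, v a ≤ 1 ∧ α ^ m * a ^ p - ξ ^ m * a = c := by
  intro c hc
  have hαm : α ^ m ≠ 0 := pow_ne_zero m (v.ne_zero_iff.mp (by simp [hα]))
  obtain ⟨hdeg, hlc⟩ := natDegree_leadingCoeff_C_mul_X_pow_sub_C_mul_X_sub_C hαm (ξ ^ m) c hp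
  set P : K[X] := C (α ^ m) * X ^ p - C (ξ ^ m) * X - C c
  have hcoeff : P.coeff 0 = -c := by simp [P, coeff_X, coeff_C, show 0 ≠ p by omega]
  obtain ⟨a, ha, hva⟩ := (IsAlgClosed.splits P).exists_mem_roots_abv_le_one v (by omega)
    (by simpa [hcoeff, hlc, hα] using hc)
  refine ⟨a, hva, sub_eq_zero.mp ?_⟩
  simpa [P] using (mem_roots (ne_zero_of_natDegree_gt (hdeg ▸ hp))).mp ha

/-- Let `K` be an algebraically closed field with a nonarchimedean absolute value,
`p ≥ 2`, `m : ℕ`, and `α, ξ ∈ K` with `|α| = 1` and `|ξ| ≤ 1`. Then for every `c` with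
`|c| ≤ 1` there exists `a` with `|a| ≤ 1` such that `α^m · a^p − ξ^m · a = c`. -/
theorem stmt1 {K : Type*} [Field K] [IsAlgClosed K] (v : AbsoluteValue K ℝ)
    (hna : IsNonarchimedean v) (p : ℕ) (hp : 2 ≤ p) (m : ℕ)
    (α ξ : K) (hα : v α = 1) (hξ : v ξ ≤ 1) :
    ∀ c : K, v c ≤ 1 → ∃ a : K, v a ≤ 1 ∧ α ^ m * a ^ p - ξ ^ m * a = c :=
  stmt1_general v p hp m α ξ hα
end

section
/- Let p be a prime number, let B and C be commutative rings of characteristic p, let g : B → C be a surjective ring homomorphism with kernel J, and assume that B is complete and separated in the J-adic topology (i.e., B is J-adically complete). Then there exists a unique ring homomorphism f : C^♭ → B from the inverse limit perfection C^♭ = lim_φ C to B with the following property: for every a = (x_0, x_1, …) ∈ C^♭, every natural number n, and every y ∈ B with g(y) = x_n, one has f(a) − y^{p^n} ∈ J^{n+1}. In particular g(f(a)) = x_0 for all a ∈ C^♭. -/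
/-!
Two lifts of the same element of `C` differ by an element of `J`, so in characteristic `p` their
`p^n`-th powers differ by the `p^n`-th power of an element of `J`, which lies in
`J^(p^n) ⊆ J^(n+1)`.
Hence for `a = (x_n) ∈ C^♭` and lifts `y_n` of `x_n`, the sequence `y_n^(p^n)` is `J`-adically
Cauchy, and its limit `f a` is independent of the lifts. Additivity and multiplicativity of `f`
follow because `y_n + y'_n` and `y_n y'_n` are lifts of the components of `a + a'` and `a a'`,
and `(y + y')^(p^n) = y^(p^n) + y'^(p^n)`.
-/

open Perfection

section AdicLimits

variable {R : Type*} [CommRing R] {I : Ideal R}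

lemma IsHausdorff.eq_of_forall_sub_mem_pow [IsHausdorff I R] {x y : R}
    (h : ∀ n, x - y ∈ I ^ n) : x = y := by
  refine sub_eq_zero.mp (IsHausdorff.haus ‹_› (x - y) fun n => ?_)
  rw [SModEq.zero, smul_eq_mul, Ideal.mul_top]
  exact h n

lemma IsPrecomplete.exists_forall_sub_mem_pow [IsPrecomplete I R] {z : ℕ → R}
    (h : ∀ n, z n - z (n + 1) ∈ I ^ n) : ∃ L, ∀ n, z n - L ∈ I ^ n := by
  have hcauchy : ∀ m k, z m - z (m + k) ∈ I ^ m := by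
    intro m k
    induction k with
    | zero => simp
    | succ k ih =>
      rw [← sub_add_sub_cancel _ (z (m + k))]
      exact add_mem ih (Ideal.pow_le_pow_right (Nat.le_add_right m k) (h (m + k)))
  obtain ⟨L, hL⟩ := IsPrecomplete.prec ‹_› (f := z) fun {m n} hmn => by
    obtain ⟨k, rfl⟩ := Nat.exists_eq_add_of_le hmn
    rw [SModEq.sub_mem, smul_eq_mul, Ideal.mul_top]
    exact hcauchy m k
  refine ⟨L, fun n => ?_⟩
  have := hL n
  rwa [SModEq.sub_mem, smul_eq_mul, Ideal.mul_top] at this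

end AdicLimits

lemma sub_pow_char_pow_mem_pow_succ {R : Type*} [CommRing R] (p : ℕ) [Fact p.Prime]
    [CharP R p] {I : Ideal R} {x y : R} (h : x - y ∈ I) (n : ℕ) :
    x ^ p ^ n - y ^ p ^ n ∈ I ^ (n + 1) := by
  rw [← sub_pow_char_pow]
  exact Ideal.pow_le_pow_right (Nat.lt_pow_self (Fact.out : p.Prime).one_lt)
    (Ideal.pow_mem_pow h _)

lemma pow_sub_pow_mem_ker_pow {B C : Type*} [CommRing B] [CommRing C] (p : ℕ) [Fact p.Prime]
    [CharP B p] {g : B →+* C} {y y' : B} (h : g y = g y') (n : ℕ) :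
    y ^ p ^ n - y' ^ p ^ n ∈ RingHom.ker g ^ (n + 1) :=
  sub_pow_char_pow_mem_pow_succ p (by rwa [RingHom.mem_ker, map_sub, sub_eq_zero]) n

section PerfectionLift

variable {p : ℕ} [Fact p.Prime] {B C : Type*} [CommRing B] [CommRing C] [CharP C p]
  {g : B →+* C}

variable (p g) in
def IsLimitOfPowLifts (a : Perfection C p) (b : B) : Prop :=
  ∀ (n : ℕ) (y : B), g y = coeff C p n a → b - y ^ p ^ n ∈ RingHom.ker g ^ (n + 1)

variable {a a' : Perfection C p} {b b' : B}

lemma IsLimitOfPowLifts.unique (hg : Function.Surjective g) [IsHausdorff (RingHom.ker g) B]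
    (h : IsLimitOfPowLifts p g a b) (h' : IsLimitOfPowLifts p g a b') : b = b' := by
  refine IsHausdorff.eq_of_forall_sub_mem_pow (I := RingHom.ker g) fun n => ?_
  obtain ⟨y, hy⟩ := hg (coeff C p n a)
  rw [← sub_sub_sub_cancel_right _ _ (y ^ p ^ n)]
  exact Ideal.pow_le_pow_right n.le_succ (sub_mem (h n y hy) (h' n y hy))

lemma IsLimitOfPowLifts.map_eq_coeff_zero (hg : Function.Surjective g)
    (h : IsLimitOfPowLifts p g a b) : g b = coeff C p 0 a := by
  obtain ⟨y, hy⟩ := hg (coeff C p 0 a)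
  have : g b = g y := by simpa [sub_eq_zero] using h 0 y hy
  rw [this, hy]

variable [CharP B p]

lemma IsLimitOfPowLifts.of_exists
    (h : ∀ n, ∃ y, g y = coeff C p n a ∧ b - y ^ p ^ n ∈ RingHom.ker g ^ (n + 1)) :
    IsLimitOfPowLifts p g a b := by
  intro n y' hy'
  obtain ⟨y, hy, hb⟩ := h n
  rw [← sub_add_sub_cancel _ (y ^ p ^ n)]
  exact add_mem hb (pow_sub_pow_mem_ker_pow p (hy.trans hy'.symm) n)

lemma IsLimitOfPowLifts.one : IsLimitOfPowLifts p g (1 : Perfection C p) (1 : B) :=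
  .of_exists fun n => ⟨1, by simp⟩

lemma IsLimitOfPowLifts.add (hg : Function.Surjective g) (h : IsLimitOfPowLifts p g a b)
    (h' : IsLimitOfPowLifts p g a' b') : IsLimitOfPowLifts p g (a + a') (b + b') := by
  refine .of_exists fun n => ?_
  obtain ⟨y, hy⟩ := hg (coeff C p n a)
  obtain ⟨y', hy'⟩ := hg (coeff C p n a')
  refine ⟨y + y', by rw [map_add, hy, hy', map_add], ?_⟩
  rw [add_pow_char_pow, add_sub_add_comm]
  exact add_mem (h n y hy) (h' n y' hy')

lemma IsLimitOfPowLifts.mul (hg : Function.Surjective g) (h : IsLimitOfPowLifts p g a b)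
    (h' : IsLimitOfPowLifts p g a' b') : IsLimitOfPowLifts p g (a * a') (b * b') := by
  refine .of_exists fun n => ?_
  obtain ⟨y, hy⟩ := hg (coeff C p n a)
  obtain ⟨y', hy'⟩ := hg (coeff C p n a')
  refine ⟨y * y', by rw [map_mul, hy, hy', map_mul], ?_⟩
  have : b * b' - (y * y') ^ p ^ n = (b - y ^ p ^ n) * b' + y ^ p ^ n * (b' - y' ^ p ^ n) := by
    ring
  rw [this]
  exact add_mem (Ideal.mul_mem_right _ _ (h n y hy)) (Ideal.mul_mem_left _ _ (h' n y' hy'))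

lemma exists_isLimitOfPowLifts (hg : Function.Surjective g) [IsPrecomplete (RingHom.ker g) B]
    (a : Perfection C p) : ∃ b, IsLimitOfPowLifts p g a b := by
  choose y hy using fun n => hg (coeff C p n a)
  have hstep : ∀ n, y n ^ p ^ n - y (n + 1) ^ p ^ (n + 1) ∈ RingHom.ker g ^ (n + 1) := by
    intro n
    rw [pow_succ' p n, pow_mul]
    exact pow_sub_pow_mem_ker_pow p (by rw [map_pow, hy, hy, coeff_pow_p']) n
  obtain ⟨L, hL⟩ := IsPrecomplete.exists_forall_sub_mem_pow (I := RingHom.ker g)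
    (z := fun n => y n ^ p ^ n) fun n => Ideal.pow_le_pow_right n.le_succ (hstep n)
  refine ⟨L, .of_exists fun n => ⟨y n, hy n, ?_⟩⟩
  rw [← neg_sub, ← sub_add_sub_cancel _ (y (n + 1) ^ p ^ (n + 1))]
  exact neg_mem (add_mem (hstep n) (hL (n + 1)))

variable (p) in
noncomputable def perfectionLift (hg : Function.Surjective g) [IsAdicComplete (RingHom.ker g) B] :
    Perfection C p →+* B :=
  have hF a := (exists_isLimitOfPowLifts hg a).choose_spec
  RingHom.mk'
    { toFun a := (exists_isLimitOfPowLifts hg a).choose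
      map_one' := (hF 1).unique hg IsLimitOfPowLifts.one
      map_mul' a a' := (hF (a * a')).unique hg ((hF a).mul hg (hF a')) }
    fun a a' => (hF (a + a')).unique hg ((hF a).add hg (hF a'))

lemma isLimitOfPowLifts_perfectionLift (hg : Function.Surjective g)
    [IsAdicComplete (RingHom.ker g) B] (a : Perfection C p) :
    IsLimitOfPowLifts p g a (perfectionLift p hg a) :=
  (exists_isLimitOfPowLifts hg a).choose_spec

end PerfectionLift

/-- Let `p` be prime, `B, C` commutative rings of characteristic `p`, `g : B → C` a
surjective ring homomorphism with kernel `J`, and assume `B` is `J`-adically complete.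
Then there is a unique ring homomorphism `f : C^♭ → B` from the inverse limit perfection
such that for every `a ∈ C^♭`, every `n`, and every lift `y ∈ B` of the `n`-th component
of `a`, one has `f a − y^(p^n) ∈ J^(n+1)`; in particular `g (f a)` is the `0`-th
component of `a`. -/
theorem stmt8 (p : ℕ) [Fact p.Prime] {B C : Type*} [CommRing B] [CommRing C]
    [CharP B p] [CharP C p] (g : B →+* C) (hg : Function.Surjective g)
    [IsAdicComplete (RingHom.ker g) B] :
    ∃! f : Perfection C p →+* B,
      (∀ (a : Perfection C p) (n : ℕ) (y : B), g y = Perfection.coeff C p n a →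
        f a - y ^ p ^ n ∈ RingHom.ker g ^ (n + 1)) ∧
      ∀ a : Perfection C p, g (f a) = Perfection.coeff C p 0 a := by
  have hlim := isLimitOfPowLifts_perfectionLift (p := p) hg
  refine ⟨perfectionLift p hg, ⟨hlim, fun a => (hlim a).map_eq_coeff_zero hg⟩, ?_⟩
  rintro f ⟨hf, -⟩
  ext a
  exact IsLimitOfPowLifts.unique hg (hf a) (hlim a)
end

section
/- Let p be a prime number and let C be a commutative ring of characteristic p with inverse limit perfection C^♭ = lim_φ C and projections coeff_n : C^♭ → C. The ring homomorphisms W(coeff_n) : W(C^♭) → W(C) of p-typical Witt vector rings satisfy F ∘ W(coeff_{n+1}) = W(coeff_n) for all n, where F is the Witt vector Frobenius of W(C), and the induced ring homomorphism from W(C^♭) to the subring of ∏_{n∈ℕ} W(C) consisting of all sequences s with F(s_{n+1}) = s_n for all n is bijective. -/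
/-!
Over a ring of characteristic `p` the Witt vector Frobenius raises each Witt coefficient to the
`p`-th power, and `W` acts coefficientwise on ring maps. Hence a Frobenius-compatible sequence of
Witt vectors over `C` is, coefficient by coefficient, a `p`-th power compatible sequence in `C`,
i.e. an element of `C^♭`.
-/

namespace WittVector

variable {p : ℕ} [Fact p.Prime] {C : Type*} [CommRing C] [CharP C p]

theorem frobenius_map_perfectionCoeff_succ (n : ℕ) (x : WittVector p (Perfection C p)) :
    frobenius (map (Perfection.coeff C p (n + 1)) x) = map (Perfection.coeff C p n) x :=
  ext fun k => by
    rw [coeff_frobenius_charP]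
    exact Perfection.coeff_pow_p' _ _

theorem map_perfectionCoeff_injective :
    Function.Injective
      (fun (x : WittVector p (Perfection C p)) (n : ℕ) => map (Perfection.coeff C p n) x) :=
  fun _ _ h => ext fun k => Perfection.ext fun n => congrArg (coeff · k) (congrFun h n)

def ofFrobeniusCompatible (s : ℕ → WittVector p C) (hs : ∀ n, frobenius (s (n + 1)) = s n) :
    WittVector p (Perfection C p) :=
  mk p fun k => ⟨fun n => (s n).coeff k, fun n => by
    simpa only [coeff_frobenius_charP] using congrArg (coeff · k) (hs n)⟩

theorem map_perfectionCoeff_ofFrobeniusCompatible (s : ℕ → WittVector p C)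
    (hs : ∀ n, frobenius (s (n + 1)) = s n) (n : ℕ) :
    map (Perfection.coeff C p n) (ofFrobeniusCompatible s hs) = s n :=
  ext fun _ => rfl

end WittVector

open WittVector in
/-- For `p` prime and `C` a commutative ring of characteristic `p`, the ring homomorphisms
`W(coeff_n) : W(C^♭) → W(C)` satisfy `F ∘ W(coeff_{n+1}) = W(coeff_n)` (where `F` is the
Witt vector Frobenius), and the induced map from `W(C^♭)` to the subring
`lim_F W(C) ⊆ ∏_n W(C)` of Frobenius-compatible sequences is bijective. -/
theorem stmt10 (p : ℕ) [Fact p.Prime] {C : Type*} [CommRing C] [CharP C p] :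
    (∀ n : ℕ,
      (WittVector.frobenius (p := p) (R := C)).comp
          (WittVector.map (Perfection.coeff C p (n + 1)))
        = WittVector.map (Perfection.coeff C p n)) ∧
    Function.Injective
      (fun (x : WittVector p (Ring.Perfection C p)) (n : ℕ) =>
        WittVector.map (Perfection.coeff C p n) x) ∧
    Set.range
      (fun (x : WittVector p (Ring.Perfection C p)) (n : ℕ) =>
        WittVector.map (Perfection.coeff C p n) x)
      = {s : ℕ → WittVector p C |
          ∀ n : ℕ, WittVector.frobenius (p := p) (R := C) (s (n + 1)) = s n} := by
  refine ⟨fun n => RingHom.ext (frobenius_map_perfectionCoeff_succ n),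
    map_perfectionCoeff_injective, Set.ext fun s => ⟨?_, fun hs => ?_⟩⟩
  · rintro ⟨x, rfl⟩ n
    exact frobenius_map_perfectionCoeff_succ n x
  · exact ⟨ofFrobeniusCompatible s hs, funext (map_perfectionCoeff_ofFrobeniusCompatible s hs)⟩
end
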